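/- Let T be a semigroup, a, a₁ : T → ℂ additive functions, m₁,…,m_N : T → ℂ multiplicative functions, and c₁,…,c_N ∈ ℂ. If a₁(x) + a(x)² = Σ_{j=1}^N c_j m_j(x) for all x ∈ T, then a = 0 on T. -/
import Mathlib


open scoped BigOperators

variable {S : Type*}

/-- A multiplicative function on a semigroup `S`. -/
def IsMultiplicativeFn [Semigroup S] (χ : S → ℂ) : Prop :=
  ∀ x y, χ (x * y) = χ x * χ y

/-- An additive function on a semigroup `S`. -/
def IsAdditiveFn [Semigroup S] (a : S → ℂ) : Prop :=
  ∀ x y, a (x * y) = a x + a y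

/-- A function additive on a subset `T` of `S`. -/
def IsAdditiveOnSet [Semigroup S] (a : S → ℂ) (T : Set S) : Prop :=
  ∀ x ∈ T, ∀ y ∈ T, a (x * y) = a x + a y

/-- A function multiplicative on a subset `T` of `S`. -/
def IsMultiplicativeOnSet [Semigroup S] (χ : S → ℂ) (T : Set S) : Prop :=
  ∀ x ∈ T, ∀ y ∈ T, χ (x * y) = χ x * χ y

/-- `Ψ_χ(φ) (x) = χ(x) φ(x)` for `x ∉ I_χ` and `0` on `I_χ = {x | χ x = 0}`.
Functions on `S ∖ I_χ` are represented as functions on `S` whose values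
off `{x | χ x ≠ 0}` are irrelevant. -/
noncomputable def PsiFn [Semigroup S] (χ φ : S → ℂ) : S → ℂ :=
  fun x => if χ x = 0 then 0 else χ x * φ x

/-- `S` is generated by its squares. -/
def SquareGenerated (S : Type*) [Semigroup S] : Prop :=
  ∀ x : S, x ∈ Subsemigroup.closure {y : S | ∃ z : S, y = z * z}

private def pw {T : Type*} [Semigroup T] (x : T) : ℕ → T
  | 0 => x
  | n + 1 => pw x n * x

/-- If `a₁ + a²` equals a linear combination of multiplicative
functions on a semigroup `T`, with `a₁, a` additive, then `a = 0`. -/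
theorem stmt14 {T : Type*} [Semigroup T] (a a₁ : T → ℂ)
    (ha : IsAdditiveFn a) (ha₁ : IsAdditiveFn a₁)
    (N : ℕ) (c : Fin N → ℂ) (m : Fin N → T → ℂ)
    (hm : ∀ j, IsMultiplicativeFn (m j))
    (h : ∀ x : T, a₁ x + (a x) ^ 2 = ∑ j, c j * m j x) :
    ∀ x : T, a x = 0 := by
  classical
  intro x
  have hpw_add : ∀ (b : T → ℂ), IsAdditiveFn b → ∀ n : ℕ,
      b (pw x n) = ((n : ℂ) + 1) * b x := by
    intro b hb n
    induction n with
    | zero => simp [pw]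
    | succ n ih =>
      show b (pw x n * x) = _
      rw [hb, ih]; push_cast; ring
  have hpw_mul : ∀ j (n : ℕ), m j (pw x n) = (m j x) ^ (n + 1) := by
    intro j n
    induction n with
    | zero => simp [pw]
    | succ n ih =>
      show m j (pw x n * x) = _
      rw [hm j, ih]; ring
  set α := a₁ x with hα
  set β := (a x) ^ 2 with hβ
  set F : ℕ → ℂ := fun n => α * n + β * n ^ 2 with hFdef
  have hF : ∀ n : ℕ, 1 ≤ n → F n = ∑ j, c j * (m j x) ^ n := by
    intro n hn
    cases n with
    | zero => omega
    | succ k =>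
      have h2 := h (pw x k)
      rw [hpw_add a₁ ha₁ k, hpw_add a ha k] at h2
      simp only [hpw_mul] at h2
      simp only [hFdef]
      push_cast
      linear_combination h2
  set s : Finset (Fin N) := Finset.univ.filter (fun j => m j x ≠ 1) with hs
  set P : Polynomial ℂ := ∏ j ∈ s, (Polynomial.X - Polynomial.C (m j x)) with hP
  have hPeval : ∀ z : ℂ, P.eval z = ∏ j ∈ s, (z - m j x) := by
    intro z; simp [hP, Polynomial.eval_prod]
  have hP1 : P.eval 1 ≠ 0 := by
    rw [hPeval]
    apply Finset.prod_ne_zero_iff.mpr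
    intro j hj
    rw [hs, Finset.mem_filter] at hj
    exact sub_ne_zero.mpr (fun hh => hj.2 hh.symm)
  have hProot : ∀ j, m j x ≠ 1 → P.eval (m j x) = 0 := by
    intro j hj
    rw [hPeval]
    exact Finset.prod_eq_zero (by simp [hs, hj]) (sub_self _)
  have hEval : ∀ z : ℂ,
      ∑ k ∈ Finset.range (P.natDegree + 1), P.coeff k * z ^ k = P.eval z := by
    intro z; rw [Polynomial.eval_eq_sum_range]
  set G : ℕ → ℂ := fun n => ∑ k ∈ Finset.range (P.natDegree + 1),
      P.coeff k * F (n + k) with hGdef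
  have hGconst : ∀ n : ℕ, 1 ≤ n → G n = ∑ j, c j * P.eval (m j x) := by
    intro n hn
    have step1 : G n = ∑ k ∈ Finset.range (P.natDegree + 1),
        P.coeff k * ∑ j, c j * (m j x) ^ (n + k) := by
      simp only [hGdef]
      exact Finset.sum_congr rfl fun k _ => by rw [hF (n + k) (by omega)]
    have step2 : (∑ k ∈ Finset.range (P.natDegree + 1),
        P.coeff k * ∑ j, c j * (m j x) ^ (n + k))
        = ∑ j, c j * (m j x) ^ n * P.eval (m j x) := by
      simp_rw [Finset.mul_sum]
      rw [Finset.sum_comm]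
      refine Finset.sum_congr rfl fun j _ => ?_
      rw [← hEval (m j x), Finset.mul_sum]
      refine Finset.sum_congr rfl fun k _ => ?_
      rw [pow_add]; ring
    rw [step1, step2]
    refine Finset.sum_congr rfl fun j _ => ?_
    by_cases hj : m j x = 1
    · rw [hj]; simp
    · rw [hProot j hj]; ring
  have hGdiff : ∀ n : ℕ, G (n + 2) - 2 * G (n + 1) + G n = 2 * β * P.eval 1 := by
    intro n
    have lhs : G (n + 2) - 2 * G (n + 1) + G n
        = ∑ k ∈ Finset.range (P.natDegree + 1),
            (P.coeff k * F (n + 2 + k) - 2 * (P.coeff k * F (n + 1 + k))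
              + P.coeff k * F (n + k)) := by
      simp only [hGdef, Finset.mul_sum, ← Finset.sum_sub_distrib,
        ← Finset.sum_add_distrib]
    rw [lhs, ← hEval 1, Finset.mul_sum]
    refine Finset.sum_congr rfl fun k _ => ?_
    simp only [hFdef]
    push_cast
    ring
  have hzero : 2 * β * P.eval 1 = 0 := by
    have h1 := hGdiff 1
    rw [hGconst (1 + 2) (by omega), hGconst (1 + 1) (by omega),
      hGconst 1 (by omega)] at h1
    linear_combination -h1
  have hβ0 : β = 0 := by
    rcases mul_eq_zero.mp hzero with h' | h'
    · rcases mul_eq_zero.mp h' with h'' | h''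
      · exact absurd h'' two_ne_zero
      · exact h''
    · exact absurd h' hP1
  have : (a x) ^ 2 = 0 := hβ.symm.trans hβ0
  exact pow_eq_zero_iff two_ne_zero |>.mp this
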